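/- Let f : ℂ → ℂ be analytic at z₀ with f(z₀) = 0 and f'(z₀) ≠ 0, and define Halley's method H_f(w) = w + 2·f(w)·f'(w)/(f(w)·f''(w) − 2·f'(w)²). Then H_f is analytic on a neighborhood of z₀ and z₀ is a second-order superattracting fixed point: H_f(z₀) = z₀, (H_f)'(z₀) = 0, and (H_f)''(z₀) = 0. -/

import Mathlib

/-! Differentiating `H_f = id + 2 f f' / D` with `D = f f'' - 2 f'²` and `D' = f f''' - 3 f' f''`
gives the identity `H_f' = f² (3 f''² - 2 f' f''') / D²`. Near a simple zero `z₀` of `f` we have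
`D(z₀) = -2 f'(z₀)² ≠ 0`, so `H_f'` is `f²` times an analytic function; hence both `H_f'` and
`H_f''` vanish at `z₀`, because `f(z₀) = 0`. -/

open Filter Topology

variable {𝕜 : Type*} [NontriviallyNormedField 𝕜]

noncomputable def halleyDenom (f : 𝕜 → 𝕜) (w : 𝕜) : 𝕜 :=
  f w * deriv (deriv f) w - 2 * deriv f w ^ 2

noncomputable def halley (f : 𝕜 → 𝕜) (w : 𝕜) : 𝕜 :=
  w + 2 * f w * deriv f w / halleyDenom f w

theorem halleyDenom_ne_zero [NeZero (2 : 𝕜)] {f : 𝕜 → 𝕜} {z : 𝕜} (hfz : f z = 0)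
    (hf' : deriv f z ≠ 0) : halleyDenom f z ≠ 0 := by
  rw [halleyDenom, hfz, zero_mul, zero_sub, neg_ne_zero]
  exact mul_ne_zero two_ne_zero (pow_ne_zero 2 hf')

theorem halley_eq_self {f : 𝕜 → 𝕜} {z : 𝕜} (hfz : f z = 0) : halley f z = z := by
  simp [halley, hfz]

theorem hasDerivAt_halleyDenom {f : 𝕜 → 𝕜} {w : 𝕜} (hf : DifferentiableAt 𝕜 f w)
    (hf' : DifferentiableAt 𝕜 (deriv f) w) (hf'' : DifferentiableAt 𝕜 (deriv (deriv f)) w) :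
    HasDerivAt (halleyDenom f)
      (f w * deriv (deriv (deriv f)) w - 3 * deriv f w * deriv (deriv f) w) w := by
  have := (hf.hasDerivAt.fun_mul hf''.hasDerivAt).fun_sub ((hf'.hasDerivAt.fun_pow 2).const_mul 2)
  refine this.congr_deriv ?_
  push_cast
  ring

theorem hasDerivAt_halley {f : 𝕜 → 𝕜} {w : 𝕜} (hf : DifferentiableAt 𝕜 f w)
    (hf' : DifferentiableAt 𝕜 (deriv f) w) (hf'' : DifferentiableAt 𝕜 (deriv (deriv f)) w)
    (hD : halleyDenom f w ≠ 0) :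
    HasDerivAt (halley f)
      (f w ^ 2 * (3 * deriv (deriv f) w ^ 2 - 2 * deriv f w * deriv (deriv (deriv f)) w)
        / halleyDenom f w ^ 2) w := by
  have hN := (hf.hasDerivAt.const_mul 2).fun_mul hf'.hasDerivAt
  have := (hasDerivAt_id' w).fun_add (hN.fun_div (hasDerivAt_halleyDenom hf hf' hf'') hD)
  refine this.congr_deriv ?_
  field_simp
  simp only [halleyDenom]
  ring

theorem deriv_sq_mul_eq_zero {g S : 𝕜 → 𝕜} {z : 𝕜} (hg : DifferentiableAt 𝕜 g z)
    (hS : DifferentiableAt 𝕜 S z) (hgz : g z = 0) :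
    deriv (fun w => g w ^ 2 * S w) z = 0 := by
  rw [((hg.hasDerivAt.fun_pow 2).fun_mul hS.hasDerivAt).deriv, hgz]
  simp

section Complete

variable [CompleteSpace 𝕜] {f : 𝕜 → 𝕜} {z : 𝕜}

theorem AnalyticAt.halleyDenom (hf : AnalyticAt 𝕜 f z) :
    AnalyticAt 𝕜 (_root_.halleyDenom f) z := by
  unfold _root_.halleyDenom
  have := hf.deriv
  fun_prop

theorem AnalyticAt.halley (hf : AnalyticAt 𝕜 f z) (hD : _root_.halleyDenom f z ≠ 0) :
    AnalyticAt 𝕜 (_root_.halley f) z :=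
  analyticAt_id.add (((analyticAt_const.mul hf).mul hf.deriv).div hf.halleyDenom hD)

theorem deriv_halley_eventuallyEq (hf : AnalyticAt 𝕜 f z) (hD : halleyDenom f z ≠ 0) :
    deriv (halley f) =ᶠ[𝓝 z] fun w => f w ^ 2 *
      ((3 * deriv (deriv f) w ^ 2 - 2 * deriv f w * deriv (deriv (deriv f)) w)
        / halleyDenom f w ^ 2) := by
  filter_upwards [hf.eventually_analyticAt, hf.halleyDenom.continuousAt.eventually_ne hD]
    with w hfw hDw
  rw [(hasDerivAt_halley hfw.differentiableAt hfw.deriv.differentiableAt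
    hfw.deriv.deriv.differentiableAt hDw).deriv, mul_div_assoc]

end Complete

theorem halley_superattracting
    (f H : ℂ → ℂ) (z₀ : ℂ)
    (hf : AnalyticAt ℂ f z₀) (hfz : f z₀ = 0) (hf' : deriv f z₀ ≠ 0)
    (hH : H = fun w => w + 2 * f w * deriv f w
        / (f w * deriv (deriv f) w - 2 * (deriv f w) ^ 2)) :
    AnalyticAt ℂ H z₀ ∧ H z₀ = z₀ ∧ deriv H z₀ = 0 ∧ deriv (deriv H) z₀ = 0 := by
  change H = halley f at hH
  subst hH
  have hD := halleyDenom_ne_zero hfz hf'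
  refine ⟨hf.halley hD, halley_eq_self hfz, ?_, ?_⟩
  · rw [(deriv_halley_eventuallyEq hf hD).eq_of_nhds, hfz]
    simp
  · rw [(deriv_halley_eventuallyEq hf hD).deriv_eq]
    have hS : AnalyticAt ℂ (fun w => (3 * deriv (deriv f) w ^ 2
        - 2 * deriv f w * deriv (deriv (deriv f)) w) / halleyDenom f w ^ 2) z₀ := by
      have := hf.deriv
      have := hf.halleyDenom
      fun_prop (disch := exact pow_ne_zero 2 hD)
    exact deriv_sq_mul_eq_zero hf.differentiableAt hS.differentiableAt hfz
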